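/- Fix γ ∈ (0,1] and p ≥ 2. There is a constant C = C(p,γ) such that for all v, v* ∈ ℝ³, setting x = v - v*, the quantity L(v,v*) := p|v|^{p-2} v·b(x) + (p/2)|v|^{p-2}‖σ(x)‖² + (p(p-2)/2)|v|^{p-4}|σ(x)v|² satisfies L(v,v*) ≤ -p|v|^{p+γ} + p|v|^p|v*|^γ + C p²(|v|^{p-2+γ}|v*|² + |v|^{p-2}|v*|^{2+γ}). -/

import Mathlib

noncomputable def norm3 (x : Fin 3 → ℝ) : ℝ := Real.sqrt (∑ i, (x i)^2)

noncomputable def dot3 (x y : Fin 3 → ℝ) : ℝ := ∑ i, x i * y i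

noncomputable def projM (x : Fin 3 → ℝ) : Matrix (Fin 3) (Fin 3) ℝ :=
  1 - (norm3 x ^ 2)⁻¹ • Matrix.of (fun i j => x i * x j)

noncomputable def sigmaM (γ : ℝ) (x : Fin 3 → ℝ) : Matrix (Fin 3) (Fin 3) ℝ :=
  norm3 x ^ (1 + γ/2) • projM x

noncomputable def frob2 (A : Matrix (Fin 3) (Fin 3) ℝ) : ℝ := Matrix.trace (A * A.transpose)

noncomputable def minner (A B : Matrix (Fin 3) (Fin 3) ℝ) : ℝ := Matrix.trace (A * B.transpose)

noncomputable def bfun (γ : ℝ) (x : Fin 3 → ℝ) : Fin 3 → ℝ := (-2 * norm3 x ^ γ) • x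

/-!
Write `x = v - v*`. The drift and trace terms combine exactly to `|x|^γ (|v*|² - |v|²)`, while
`|σ(x) v|² = |x|^γ (|v|²|v*|² - (v·v*)²)` by Lagrange's identity, which is at most
`|x|^γ |v|²|v*|²`.
Since `t ↦ t^γ` is subadditive for `γ ≤ 1`, the triangle inequality gives
`|v|^γ - |v*|^γ ≤ |x|^γ ≤ |v|^γ + |v*|^γ`, and the bound follows with `C = 1/2`,
because `p + p(p-2)/2 = p²/2`.
-/

lemma norm3_nonneg (x : Fin 3 → ℝ) : 0 ≤ norm3 x := Real.sqrt_nonneg _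

lemma norm3_sq (x : Fin 3 → ℝ) : norm3 x ^ 2 = x 0 ^ 2 + x 1 ^ 2 + x 2 ^ 2 := by
  rw [norm3, Real.sq_sqrt (by positivity), Fin.sum_univ_three]

lemma norm3_eq_norm (x : Fin 3 → ℝ) :
    norm3 x = ‖(WithLp.toLp 2 x : EuclideanSpace ℝ (Fin 3))‖ := by
  simp only [norm3, EuclideanSpace.norm_eq, Real.norm_eq_abs, sq_abs]

lemma norm3_eq_zero {x : Fin 3 → ℝ} : norm3 x = 0 ↔ x = 0 := by
  rw [norm3_eq_norm, norm_eq_zero, WithLp.toLp_eq_zero]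

lemma norm3_sub_le_add (v w : Fin 3 → ℝ) : norm3 (v - w) ≤ norm3 v + norm3 w := by
  simpa only [norm3_eq_norm, WithLp.toLp_sub] using norm_sub_le _ _

lemma norm3_le_norm3_sub_add (v w : Fin 3 → ℝ) : norm3 v ≤ norm3 (v - w) + norm3 w := by
  simpa only [norm3_eq_norm, WithLp.toLp_sub] using norm_le_norm_sub_add _ _

lemma norm3_smul_sq (c : ℝ) (x : Fin 3 → ℝ) : norm3 (c • x) ^ 2 = c ^ 2 * norm3 x ^ 2 := by
  simp only [norm3_sq, Pi.smul_apply, smul_eq_mul]; ring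

lemma frob2_smul (c : ℝ) (A : Matrix (Fin 3) (Fin 3) ℝ) :
    frob2 (c • A) = c ^ 2 * frob2 A := by
  simp only [frob2, Matrix.transpose_smul, Matrix.smul_mul, Matrix.mul_smul, Matrix.trace_smul,
    smul_eq_mul]; ring

lemma projM_mulVec (x v : Fin 3 → ℝ) :
    (projM x).mulVec v = v - ((norm3 x ^ 2)⁻¹ * dot3 x v) • x := by
  ext i
  fin_cases i <;>
    simp [projM, Matrix.mulVec, dotProduct, dot3, Fin.sum_univ_three, Matrix.one_apply] <;> ring

-- Multiplied through by `|x|²` so as to hold also at `x = 0`, where `projM 0 = 1`.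
lemma sq_mul_frob2_projM (x : Fin 3 → ℝ) : norm3 x ^ 2 * frob2 (projM x) = 2 * norm3 x ^ 2 := by
  rcases eq_or_ne x 0 with rfl | hx
  · simp [norm3]
  have h : norm3 x ^ 2 ≠ 0 := pow_ne_zero 2 (norm3_eq_zero.not.2 hx)
  simp only [frob2, Matrix.trace, projM, Matrix.smul_of, Matrix.transpose_sub,
    Matrix.transpose_one, Matrix.diag_apply, Matrix.mul_apply, Matrix.sub_apply, Matrix.one_apply,
    Matrix.of_apply, Pi.smul_apply, smul_eq_mul, Matrix.transpose_apply, Fin.sum_univ_three,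
    Fin.isValue, ↓reduceIte, Fin.reduceEq]
  rw [norm3_sq] at h ⊢
  field_simp
  ring

lemma sq_mul_norm3_projM_mulVec_sq (x v : Fin 3 → ℝ) :
    norm3 x ^ 2 * norm3 ((projM x).mulVec v) ^ 2 = norm3 x ^ 2 * norm3 v ^ 2 - dot3 x v ^ 2 := by
  rcases eq_or_ne x 0 with rfl | hx
  · simp [norm3, dot3]
  have h : norm3 x ^ 2 ≠ 0 := pow_ne_zero 2 (norm3_eq_zero.not.2 hx)
  rw [projM_mulVec]
  rw [norm3_sq] at h ⊢
  simp only [norm3_sq, dot3, Fin.sum_univ_three, Pi.sub_apply, Pi.smul_apply, smul_eq_mul]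
  field_simp
  ring

lemma rpow_one_add_half_sq {r : ℝ} (hr : 0 ≤ r) {γ : ℝ} (hγ : γ + 2 ≠ 0) :
    (r ^ (1 + γ / 2)) ^ 2 = r ^ γ * r ^ 2 := by
  rw [← Real.rpow_mul_natCast hr, ← Real.rpow_add_natCast' hr (by push_cast; exact hγ)]
  push_cast; ring_nf

lemma frob2_sigmaM {γ : ℝ} (hγ : γ + 2 ≠ 0) (x : Fin 3 → ℝ) :
    frob2 (sigmaM γ x) = 2 * norm3 x ^ γ * norm3 x ^ 2 := by
  rw [sigmaM, frob2_smul, rpow_one_add_half_sq (norm3_nonneg x) hγ, mul_assoc,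
    sq_mul_frob2_projM]
  ring

lemma norm3_sigmaM_mulVec_sq {γ : ℝ} (hγ : γ + 2 ≠ 0) (x v : Fin 3 → ℝ) :
    norm3 ((sigmaM γ x).mulVec v) ^ 2
      = norm3 x ^ γ * (norm3 x ^ 2 * norm3 v ^ 2 - dot3 x v ^ 2) := by
  rw [sigmaM, Matrix.smul_mulVec, norm3_smul_sq, rpow_one_add_half_sq (norm3_nonneg x) hγ,
    mul_assoc, sq_mul_norm3_projM_mulVec_sq]

lemma dot3_bfun_add_half_frob2_sigmaM {γ : ℝ} (hγ : γ + 2 ≠ 0) (v w : Fin 3 → ℝ) :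
    dot3 v (bfun γ (v - w)) + frob2 (sigmaM γ (v - w)) / 2
      = norm3 (v - w) ^ γ * (norm3 w ^ 2 - norm3 v ^ 2) := by
  rw [frob2_sigmaM hγ]
  simp only [bfun, norm3_sq, dot3, Fin.sum_univ_three, Pi.smul_apply, Pi.sub_apply, smul_eq_mul]
  ring

lemma norm3_sigmaM_sub_mulVec_sq_le {γ : ℝ} (hγ : γ + 2 ≠ 0) (v w : Fin 3 → ℝ) :
    norm3 ((sigmaM γ (v - w)).mulVec v) ^ 2
      ≤ norm3 (v - w) ^ γ * (norm3 v ^ 2 * norm3 w ^ 2) := by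
  have lagrange : norm3 (v - w) ^ 2 * norm3 v ^ 2 - dot3 (v - w) v ^ 2
      = norm3 v ^ 2 * norm3 w ^ 2 - dot3 v w ^ 2 := by
    simp only [norm3_sq, dot3, Fin.sum_univ_three, Pi.sub_apply]; ring
  rw [norm3_sigmaM_mulVec_sq hγ, lagrange]
  exact mul_le_mul_of_nonneg_left (sub_le_self _ (sq_nonneg _))
    (Real.rpow_nonneg (norm3_nonneg _) γ)

lemma rpow_le_rpow_add_rpow_of_le_add {a b c γ : ℝ} (ha : 0 ≤ a) (hb : 0 ≤ b) (hc : 0 ≤ c)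
    (hγ₀ : 0 ≤ γ) (hγ₁ : γ ≤ 1) (h : a ≤ b + c) : a ^ γ ≤ b ^ γ + c ^ γ :=
  (Real.rpow_le_rpow ha h hγ₀).trans (Real.rpow_add_le_add_rpow hb hc hγ₀ hγ₁)

lemma sub_two_mul_rpow_sub_four_mul_sq {a : ℝ} (ha : 0 ≤ a) (p : ℝ) :
    (p - 2) * a ^ (p - 4) * a ^ 2 = (p - 2) * a ^ (p - 2) := by
  rcases eq_or_ne p 2 with rfl | hp
  · simp
  rw [mul_assoc, ← Real.rpow_add_natCast' ha (by push_cast; intro h; apply hp; linarith)]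
  ring_nf

lemma rpow_sub_four_mul_norm3_sigmaM_mulVec_sq_le {γ p : ℝ} (hγ : γ + 2 ≠ 0) (hp : 2 ≤ p)
    (v w : Fin 3 → ℝ) :
    p * (p - 2) / 2 * norm3 v ^ (p - 4) * norm3 ((sigmaM γ (v - w)).mulVec v) ^ 2
      ≤ p * (p - 2) / 2 * norm3 v ^ (p - 2) * norm3 (v - w) ^ γ * norm3 w ^ 2 := by
  have ha := norm3_nonneg v
  have hcoef : 0 ≤ p * (p - 2) / 2 * norm3 v ^ (p - 4) := by
    have := sub_nonneg.2 hp; positivity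
  calc _ ≤ p * (p - 2) / 2 * norm3 v ^ (p - 4)
          * (norm3 (v - w) ^ γ * (norm3 v ^ 2 * norm3 w ^ 2)) :=
        mul_le_mul_of_nonneg_left (norm3_sigmaM_sub_mulVec_sq_le hγ v w) hcoef
    _ = p / 2 * ((p - 2) * norm3 v ^ (p - 4) * norm3 v ^ 2) * norm3 (v - w) ^ γ * norm3 w ^ 2 := by
        ring
    _ = _ := by rw [sub_two_mul_rpow_sub_four_mul_sq ha]; ring

theorem stmt14 (γ p : ℝ) (hγ : γ ∈ Set.Ioc (0:ℝ) 1) (hp : 2 ≤ p) :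
    ∃ C > (0:ℝ), ∀ v vs : Fin 3 → ℝ,
      p * norm3 v ^ (p - 2) * dot3 v (bfun γ (v - vs))
        + (p/2) * norm3 v ^ (p - 2) * frob2 (sigmaM γ (v - vs))
        + (p * (p - 2) / 2) * norm3 v ^ (p - 4) * norm3 ((sigmaM γ (v - vs)).mulVec v) ^ 2
      ≤ -p * norm3 v ^ (p + γ) + p * norm3 v ^ p * norm3 vs ^ γ
        + C * p^2 * (norm3 v ^ (p - 2 + γ) * norm3 vs ^ 2
            + norm3 v ^ (p - 2) * norm3 vs ^ (2 + γ)) := by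
  obtain ⟨hγ₀, hγ₁⟩ := hγ
  have hγ2 : γ + 2 ≠ 0 := by linarith
  refine ⟨1 / 2, by norm_num, fun v vs => ?_⟩
  have ha := norm3_nonneg v
  have hs := norm3_nonneg vs
  have hr := norm3_nonneg (v - vs)
  have hlower : norm3 v ^ γ ≤ norm3 (v - vs) ^ γ + norm3 vs ^ γ :=
    rpow_le_rpow_add_rpow_of_le_add ha hr hs hγ₀.le hγ₁ (norm3_le_norm3_sub_add v vs)
  have hupper : norm3 (v - vs) ^ γ ≤ norm3 v ^ γ + norm3 vs ^ γ :=
    rpow_le_rpow_add_rpow_of_le_add hr ha hs hγ₀.le hγ₁ (norm3_sub_le_add v vs)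
  rw [Real.rpow_add' ha (by linarith), Real.rpow_add' ha (by linarith),
    Real.rpow_add' hs (by linarith), Real.rpow_two,
    show norm3 v ^ p = norm3 v ^ (p - 2) * norm3 v ^ 2 by
      rw [← Real.rpow_add_natCast' ha (by push_cast; linarith)]; ring_nf]
  calc _ = p * norm3 v ^ (p - 2) * (dot3 v (bfun γ (v - vs)) + frob2 (sigmaM γ (v - vs)) / 2)
        + p * (p - 2) / 2 * norm3 v ^ (p - 4) * norm3 ((sigmaM γ (v - vs)).mulVec v) ^ 2 := by ring
    _ ≤ p * norm3 v ^ (p - 2) * (norm3 (v - vs) ^ γ * (norm3 vs ^ 2 - norm3 v ^ 2))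
        + (p * (p - 2) / 2) * norm3 v ^ (p - 2) * norm3 (v - vs) ^ γ * norm3 vs ^ 2 := by
      rw [dot3_bfun_add_half_frob2_sigmaM hγ2]
      exact add_le_add_right (rpow_sub_four_mul_norm3_sigmaM_mulVec_sq_le hγ2 hp v vs) _
    _ ≤ _ := by
      have h₁ := mul_le_mul_of_nonneg_left hlower
        (show 0 ≤ p * (norm3 v ^ (p - 2) * norm3 v ^ 2) by positivity)
      have h₂ := mul_le_mul_of_nonneg_left hupper
        (show 0 ≤ p ^ 2 / 2 * (norm3 v ^ (p - 2) * norm3 vs ^ 2) by positivity)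
      linear_combination h₁ + h₂
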